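/- arXiv:2304.03052 — 4 statements merged into one kernel-verified Lean document; each statement's English description precedes it below -/
import Mathlib

section
/- Let H be a real inner product space, let Z, Y, T, ω ∈ H and ℓ ≥ 0. Assume ‖Y − T‖ ≤ ℓ‖Y − Z‖ and ⟪Z − T, Y − ω⟫ ≥ 0. Then ‖T − ω‖² ≤ ‖Z − ω‖² − (1 − ℓ²)‖Y − Z‖². -/
open RealInnerProductSpace

/-- Quasi-contraction inequality for the forward-backward-forward update. -/
theorem fbf_quasi_contraction {H : Type*} [NormedAddCommGroup H] [InnerProductSpace ℝ H]
    (Z Y T ω : H) (ℓ : ℝ) (hℓ : 0 ≤ ℓ)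
    (h1 : ‖Y - T‖ ≤ ℓ * ‖Y - Z‖)
    (h2 : 0 ≤ ⟪Z - T, Y - ω⟫) :
    ‖T - ω‖ ^ 2 ≤ ‖Z - ω‖ ^ 2 - (1 - ℓ ^ 2) * ‖Y - Z‖ ^ 2 := by
  have key : ‖T - ω‖ ^ 2 = ‖Z - ω‖ ^ 2 - ‖Y - Z‖ ^ 2 + ‖Y - T‖ ^ 2
      - 2 * ⟪Z - T, Y - ω⟫ := by
    simp only [← real_inner_self_eq_norm_sq, inner_sub_left, inner_sub_right]
    rw [real_inner_comm ω T, real_inner_comm Y T, real_inner_comm Z ω, real_inner_comm Y Z]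
    ring
  have hsq : ‖Y - T‖ ^ 2 ≤ ℓ ^ 2 * ‖Y - Z‖ ^ 2 := by
    nlinarith [norm_nonneg (Y - T), norm_nonneg (Y - Z)]
  nlinarith
end

section
/- Let H be a real inner product space, let Z, Y, T, ω ∈ H, ℓ ≥ 0, and ρ ∈ (0, 1]. Assume ‖Y − T‖ ≤ ℓ‖Y − Z‖ and ⟪Z − T, Y − ω⟫ ≥ 0, and set W = (1 − ρ)Z + ρT. Then ‖W − ω‖² ≤ ‖Z − ω‖² − ρ(1 − ℓ²)‖Y − Z‖² − ((1 − ρ)/ρ)‖W − Z‖². -/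
open RealInnerProductSpace

/-- Relaxed-step inequality for the relaxed forward-backward-forward update. -/
theorem relaxed_fbf_inequality {H : Type*} [NormedAddCommGroup H] [InnerProductSpace ℝ H]
    (Z Y T ω : H) (ℓ ρ : ℝ) (hℓ : 0 ≤ ℓ) (hρ0 : 0 < ρ) (hρ1 : ρ ≤ 1)
    (h1 : ‖Y - T‖ ≤ ℓ * ‖Y - Z‖)
    (h2 : 0 ≤ ⟪Z - T, Y - ω⟫)
    (W : H) (hW : W = (1 - ρ) • Z + ρ • T) :
    ‖W - ω‖ ^ 2 ≤ ‖Z - ω‖ ^ 2 - ρ * (1 - ℓ ^ 2) * ‖Y - Z‖ ^ 2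
      - ((1 - ρ) / ρ) * ‖W - Z‖ ^ 2 := by
  have hY2 : ‖Y - T‖ ^ 2 ≤ ℓ ^ 2 * ‖Y - Z‖ ^ 2 := by
    nlinarith [norm_nonneg (Y - T), norm_nonneg (Y - Z)]
  -- key identity
  have e1 : ‖T - ω‖ ^ 2 = ‖Z - ω‖ ^ 2 + ‖Y - T‖ ^ 2 - ‖Y - Z‖ ^ 2
      - 2 * ⟪Z - T, Y - ω⟫ := by
    simp only [← real_inner_self_eq_norm_sq, inner_sub_left, inner_sub_right,
      real_inner_comm Z Y, real_inner_comm T Y, real_inner_comm ω Y,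
      real_inner_comm T Z, real_inner_comm ω Z, real_inner_comm ω T]
    ring
  have hT : ‖T - ω‖ ^ 2 ≤ ‖Z - ω‖ ^ 2 - (1 - ℓ ^ 2) * ‖Y - Z‖ ^ 2 := by
    rw [e1]; nlinarith
  have hWZ : W - Z = ρ • (T - Z) := by
    rw [hW]; module
  have hWω : W - ω = (Z - ω) + ρ • (T - Z) := by
    rw [hW]; module
  have e2 : ‖W - ω‖ ^ 2 = (1 - ρ) * ‖Z - ω‖ ^ 2 + ρ * ‖T - ω‖ ^ 2
      - ρ * (1 - ρ) * ‖T - Z‖ ^ 2 := by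
    rw [hWω]
    simp only [← real_inner_self_eq_norm_sq, inner_add_left, inner_add_right,
      inner_sub_left, inner_sub_right, real_inner_smul_left, real_inner_smul_right,
      real_inner_comm Z T, real_inner_comm ω T, real_inner_comm ω Z]
    ring
  have e3 : ‖W - Z‖ ^ 2 = ρ ^ 2 * ‖T - Z‖ ^ 2 := by
    rw [hWZ, norm_smul]
    simp [abs_of_pos hρ0, mul_pow]
  rw [e2, e3]
  have h4 : (1 - ρ) / ρ * (ρ ^ 2 * ‖T - Z‖ ^ 2) = ρ * (1 - ρ) * ‖T - Z‖ ^ 2 := by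
    field_simp
  rw [h4]
  nlinarith [sq_nonneg ‖T - Z‖]
end

section
/- Let H be a real inner product space, let Z, Y, T, ω ∈ H, ℓ ∈ [0, 1], and ρ ∈ (0, 1]. Assume ‖Y − T‖ ≤ ℓ‖Y − Z‖ and ⟪Z − T, Y − ω⟫ ≥ 0, and set W = (1 − ρ)Z + ρT. Then ‖W − ω‖² ≤ ‖Z − ω‖² − (2/(ρ(1 + ℓ)) − 1)‖W − Z‖². -/
open RealInnerProductSpace

/-- Combined decrease inequality (inequality (19)) for the relaxed
forward-backward-forward update. -/
theorem relaxed_fbf_combined_inequality {H : Type*} [NormedAddCommGroup H]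
    [InnerProductSpace ℝ H]
    (Z Y T ω : H) (ℓ ρ : ℝ) (hℓ0 : 0 ≤ ℓ) (hℓ1 : ℓ ≤ 1) (hρ0 : 0 < ρ) (hρ1 : ρ ≤ 1)
    (h1 : ‖Y - T‖ ≤ ℓ * ‖Y - Z‖)
    (h2 : 0 ≤ ⟪Z - T, Y - ω⟫)
    (W : H) (hW : W = (1 - ρ) • Z + ρ • T) :
    ‖W - ω‖ ^ 2 ≤ ‖Z - ω‖ ^ 2 - (2 / (ρ * (1 + ℓ)) - 1) * ‖W - Z‖ ^ 2 := by
  have hL : (0:ℝ) < 1 + ℓ := by linarith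
  set a := ‖Z - T‖ with ha
  set b := ‖Y - Z‖ with hb
  have ha0 : 0 ≤ a := norm_nonneg _
  have hb0 : 0 ≤ b := norm_nonneg _
  -- polarization
  have hdiff : (Z - T) - (Z - Y) = Y - T := by abel
  have hpol : ‖Y - T‖ ^ 2 = a ^ 2 - 2 * ⟪Z - T, Z - Y⟫ + b ^ 2 := by
    rw [← hdiff, norm_sub_sq_real, ha, hb, norm_sub_rev Z Y]
  have hTY2 : ‖Y - T‖ ^ 2 ≤ ℓ ^ 2 * b ^ 2 := by
    nlinarith [norm_nonneg (Y - T)]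
  -- triangle: a ≤ (1+ℓ) b
  have htri : a ≤ (1 + ℓ) * b := by
    have := norm_sub_le_norm_sub_add_norm_sub Z Y T
    have h' : ‖Y - T‖ ≤ ℓ * b := h1
    rw [norm_sub_rev Z Y] at this
    calc a ≤ b + ‖Y - T‖ := this
      _ ≤ b + ℓ * b := by linarith
      _ = (1 + ℓ) * b := by ring
  -- inner product split
  have hsplit : ⟪Z - T, Z - ω⟫ = ⟪Z - T, Z - Y⟫ + ⟪Z - T, Y - ω⟫ := by
    rw [← inner_add_right]
    congr 1
    abel
  have hK : a ^ 2 ≤ (1 + ℓ) * ⟪Z - T, Z - ω⟫ := by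
    nlinarith [hpol, hTY2, h2, hsplit, mul_self_le_mul_self ha0 htri,
      mul_nonneg (mul_nonneg (sub_nonneg.mpr hℓ1) ha0) ha0, sq_nonneg (a - b)]
  -- expansion of the relaxed step
  have hWZ : W - Z = ρ • (T - Z) := by
    rw [hW]; rw [sub_smul, one_smul, smul_sub]; abel
  have hWZnorm : ‖W - Z‖ = ρ * a := by
    rw [hWZ, norm_smul, Real.norm_eq_abs, abs_of_pos hρ0, norm_sub_rev T Z]
  have hWω : W - ω = (Z - ω) + ρ • (T - Z) := by
    rw [hW, smul_sub, sub_smul, one_smul]; abel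
  have hexp : ‖W - ω‖ ^ 2 = ‖Z - ω‖ ^ 2 - 2 * ρ * ⟪Z - T, Z - ω⟫ + ρ ^ 2 * a ^ 2 := by
    rw [hWω, norm_add_sq_real, real_inner_smul_right, norm_smul,
      Real.norm_eq_abs, abs_of_pos hρ0]
    have : ⟪Z - ω, T - Z⟫ = -⟪Z - T, Z - ω⟫ := by
      rw [← inner_neg_left]
      have : -(Z - T) = T - Z := by abel
      rw [this, real_inner_comm]
    rw [this, norm_sub_rev T Z, ← ha]
    ring
  rw [hexp, hWZnorm]
  have hdiv : (2 / (ρ * (1 + ℓ)) - 1) * (ρ * a) ^ 2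
      = 2 * ρ * (a ^ 2 / (1 + ℓ)) - ρ ^ 2 * a ^ 2 := by
    field_simp
  rw [hdiv]
  have hK' : a ^ 2 / (1 + ℓ) ≤ ⟪Z - T, Z - ω⟫ := by
    rw [div_le_iff₀ hL]
    nlinarith [hK]
  nlinarith [hK', hρ0.le]
end

section
/- Let H be a real inner product space, let w, w', W, ω ∈ H, σ ∈ [0, 1], and c ≥ 0, and set Z = w + σ(w − w'). Assume ‖W − ω‖² ≤ ‖Z − ω‖² − c‖W − Z‖². Then ‖W − ω‖² + c(1 − σ)‖W − w‖² ≤ (1 + σ)‖w − ω‖² − σ‖w' − ω‖² + (σ(1 + σ) − c(σ² − σ))‖w − w'‖². -/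
open RealInnerProductSpace

/-- Combined Lyapunov-type recursion (inequality (22)) between successive iterates. -/
theorem lyapunov_recursion {H : Type*} [NormedAddCommGroup H] [InnerProductSpace ℝ H]
    (w w' W ω : H) (σ c : ℝ) (hσ0 : 0 ≤ σ) (hσ1 : σ ≤ 1) (hc : 0 ≤ c)
    (Z : H) (hZ : Z = w + σ • (w - w'))
    (h : ‖W - ω‖ ^ 2 ≤ ‖Z - ω‖ ^ 2 - c * ‖W - Z‖ ^ 2) :
    ‖W - ω‖ ^ 2 + c * (1 - σ) * ‖W - w‖ ^ 2 ≤
      (1 + σ) * ‖w - ω‖ ^ 2 - σ * ‖w' - ω‖ ^ 2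
        + (σ * (1 + σ) - c * (σ ^ 2 - σ)) * ‖w - w'‖ ^ 2 := by
  set a := w - ω with ha
  set b := w - w' with hb
  set u := W - w with hu
  have hZa : Z - ω = a + σ • b := by rw [hZ]; module
  have hWZ : W - Z = u - σ • b := by rw [hZ, hu, hb]; module
  have hw' : w' - ω = a - b := by rw [ha, hb]; module
  have e1 : ‖Z - ω‖ ^ 2 = ‖a‖ ^ 2 + 2 * σ * ⟪a, b⟫ + σ ^ 2 * ‖b‖ ^ 2 := by
    rw [hZa, norm_add_sq_real, real_inner_smul_right, norm_smul, Real.norm_eq_abs,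
      mul_pow, sq_abs]
    ring
  have e2 : ‖W - Z‖ ^ 2 = ‖u‖ ^ 2 - 2 * σ * ⟪u, b⟫ + σ ^ 2 * ‖b‖ ^ 2 := by
    rw [hWZ, norm_sub_sq_real, real_inner_smul_right, norm_smul, Real.norm_eq_abs,
      mul_pow, sq_abs]
    ring
  have e3 : ‖w' - ω‖ ^ 2 = ‖a‖ ^ 2 - 2 * ⟪a, b⟫ + ‖b‖ ^ 2 := by
    rw [hw', norm_sub_sq_real]
  have e4 : (0:ℝ) ≤ ‖u‖ ^ 2 - 2 * ⟪u, b⟫ + ‖b‖ ^ 2 := by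
    have := sq_nonneg ‖u - b‖
    rwa [norm_sub_sq_real] at this
  nlinarith [mul_nonneg hc (mul_nonneg hσ0 e4), h, sq_nonneg ‖b‖]
end
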